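/- Let n ≥ 1 be a natural number, m ≠ 0 a real number, and φ : ℝⁿ → ℝ a smooth function. Define the weighted Bianchi operator on symmetric 2-tensor fields by ℬ_φ T = δ_φ T − (1/2)·d(tr T). Then, as an identity of 1-forms on ℝⁿ: ℬ_φ Ric_φ^m = (1/2)·e^{2φ/m}·d( e^{−2φ/m}·Δ_φ φ ), equivalently ℬ_φ Ric_φ^m = (1/2)·d(Δ_φ φ) − (1/m)·(Δ_φ φ)·dφ. (This is Proposition 4.4 of the paper in the case of a flat background metric.) -/

import Mathlib

open scoped RealInnerProductSpace

noncomputable section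

variable {n : ℕ}

/-- The `i`-th standard basis vector of `ℝⁿ`. -/
def stdBasis (i : Fin n) : EuclideanSpace ℝ (Fin n) :=
  EuclideanSpace.single i (1 : ℝ)

/-- The Euclidean Hessian of `u` at `x`, evaluated on `y`, `z`. -/
def hess (u : EuclideanSpace ℝ (Fin n) → ℝ)
    (x y z : EuclideanSpace ℝ (Fin n)) : ℝ :=
  fderiv ℝ (fderiv ℝ u) x y z

/-- The Euclidean Laplacian `Δu = tr (Hess u)`. -/
def lap (u : EuclideanSpace ℝ (Fin n) → ℝ) (x : EuclideanSpace ℝ (Fin n)) : ℝ :=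
  ∑ i : Fin n, hess u x (stdBasis i) (stdBasis i)

/-- The flat-background Bakry–Émery Ricci tensor `Ric_φ^m = Hess φ − (1/m) dφ ⊗ dφ`. -/
def bakryEmeryRic (m : ℝ) (φ : EuclideanSpace ℝ (Fin n) → ℝ)
    (x y z : EuclideanSpace ℝ (Fin n)) : ℝ :=
  hess φ x y z - (1 / m) * (fderiv ℝ φ x y) * (fderiv ℝ φ x z)

/-- The weighted Laplacian `Δ_φ w = Δw − ⟨∇φ, ∇w⟩`. -/
def weightedLap (φ w : EuclideanSpace ℝ (Fin n) → ℝ)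
    (x : EuclideanSpace ℝ (Fin n)) : ℝ :=
  lap w x - ⟪gradient φ x, gradient w x⟫

/-- The weighted divergence of a 2-tensor field `T`, as a 1-form:
`(δ_φ T)(Z) = Σᵢ (∂_{eᵢ} T)(eᵢ, Z) − T(∇φ, Z)`. -/
def weightedDiv (φ : EuclideanSpace ℝ (Fin n) → ℝ)
    (T : EuclideanSpace ℝ (Fin n) → EuclideanSpace ℝ (Fin n) →
      EuclideanSpace ℝ (Fin n) → ℝ)
    (x Z : EuclideanSpace ℝ (Fin n)) : ℝ :=
  (∑ i : Fin n, fderiv ℝ (fun p => T p (stdBasis i) Z) x (stdBasis i))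
    - T x (gradient φ x) Z

/-- The trace of a 2-tensor field with respect to the Euclidean inner product. -/
def tensorTrace (T : EuclideanSpace ℝ (Fin n) → EuclideanSpace ℝ (Fin n) →
    EuclideanSpace ℝ (Fin n) → ℝ) (x : EuclideanSpace ℝ (Fin n)) : ℝ :=
  ∑ i : Fin n, T x (stdBasis i) (stdBasis i)

/-- The weighted Bianchi operator `ℬ_φ T = δ_φ T − ½ d(tr T)`. -/
def weightedBianchiOp (φ : EuclideanSpace ℝ (Fin n) → ℝ)
    (T : EuclideanSpace ℝ (Fin n) → EuclideanSpace ℝ (Fin n) →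
      EuclideanSpace ℝ (Fin n) → ℝ)
    (x Z : EuclideanSpace ℝ (Fin n)) : ℝ :=
  weightedDiv φ T x Z - (1 / 2) * fderiv ℝ (tensorTrace T) x Z

/-! ### Auxiliary lemmas -/

section Aux

lemma euclid_decomp (v : EuclideanSpace ℝ (Fin n)) :
    v = ∑ i : Fin n, v i • stdBasis i := by
  have := (EuclideanSpace.basisFun (Fin n) ℝ).sum_repr v
  simpa [stdBasis, EuclideanSpace.basisFun_apply, EuclideanSpace.basisFun_repr] using this.symm

lemma clm_decomp (L : EuclideanSpace ℝ (Fin n) →L[ℝ] ℝ) (v : EuclideanSpace ℝ (Fin n)) :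
    L v = ∑ i : Fin n, v i * L (stdBasis i) := by
  conv_lhs => rw [euclid_decomp v]
  rw [map_sum]
  simp [smul_eq_mul]

lemma inner_gradient (w : EuclideanSpace ℝ (Fin n) → ℝ) (x v : EuclideanSpace ℝ (Fin n)) :
    ⟪gradient w x, v⟫ = fderiv ℝ w x v := by
  rw [gradient]; exact InnerProductSpace.toDual_symm_apply

lemma grad_coord (w : EuclideanSpace ℝ (Fin n) → ℝ) (x : EuclideanSpace ℝ (Fin n)) (i : Fin n) :
    gradient w x i = fderiv ℝ w x (stdBasis i) := by
  rw [← inner_gradient]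
  rw [stdBasis, EuclideanSpace.inner_single_right]; simp

variable {φ : EuclideanSpace ℝ (Fin n) → ℝ} (hφ : ContDiff ℝ (⊤ : ℕ∞) φ)

include hφ

lemma diff_F1 : Differentiable ℝ (fderiv ℝ φ) :=
  (hφ.fderiv_right (m := (⊤ : ℕ∞)) (by simp)).differentiable (by simp)

lemma diff_F2 : Differentiable ℝ (fderiv ℝ (fderiv ℝ φ)) :=
  ((hφ.fderiv_right (m := (⊤ : ℕ∞)) (by simp)).fderiv_right (m := (⊤ : ℕ∞)) (by simp)).differentiable (by simp)

lemma diff_f_apply (y : EuclideanSpace ℝ (Fin n)) :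
    Differentiable ℝ (fun p => fderiv ℝ φ p y) :=
  (diff_F1 hφ).clm_apply (differentiable_const y)

lemma fderiv_f_apply (x y v : EuclideanSpace ℝ (Fin n)) :
    fderiv ℝ (fun p => fderiv ℝ φ p y) x v = hess φ x v y := by
  rw [fderiv_clm_apply (diff_F1 hφ x) (differentiableAt_const y)]
  simp [hess]

lemma diff_hess_apply (y z : EuclideanSpace ℝ (Fin n)) :
    Differentiable ℝ (fun p => hess φ p y z) := by
  have : (fun p => hess φ p y z) = fun p => (fun q => fderiv ℝ (fderiv ℝ φ) q y) p z := rfl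
  rw [this]
  exact ((diff_F2 hφ).clm_apply (differentiable_const y)).clm_apply (differentiable_const z)

lemma fderiv_hess_apply (x y z v : EuclideanSpace ℝ (Fin n)) :
    fderiv ℝ (fun p => hess φ p y z) x v =
      fderiv ℝ (fderiv ℝ (fderiv ℝ φ)) x v y z := by
  have h2 : fderiv ℝ (fun q => fderiv ℝ (fderiv ℝ φ) q y) x =
      (fderiv ℝ (fderiv ℝ (fderiv ℝ φ)) x).flip y := by
    rw [fderiv_clm_apply (diff_F2 hφ x) (differentiableAt_const y)]
    ext w; simp
  have h1 : (fun p => hess φ p y z) = fun p => (fun q => fderiv ℝ (fderiv ℝ φ) q y) p z := rfl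
  rw [h1, fderiv_clm_apply ((diff_F2 hφ).clm_apply (differentiable_const y) x)
    (differentiableAt_const z)]
  simp [h2]

lemma hess_symm (x y z : EuclideanSpace ℝ (Fin n)) : hess φ x y z = hess φ x z y :=
  (hφ.contDiffAt.isSymmSndFDerivAt (by rw [minSmoothness_of_isRCLikeNormedField]; exact WithTop.coe_le_coe.mpr (le_top : (2 : ℕ∞) ≤ ⊤))) y z

lemma third_symm12 (x a b c : EuclideanSpace ℝ (Fin n)) :
    fderiv ℝ (fderiv ℝ (fderiv ℝ φ)) x a b c = fderiv ℝ (fderiv ℝ (fderiv ℝ φ)) x b a c := by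
  have h := (((hφ.fderiv_right (m := (⊤ : ℕ∞)) (by simp)).contDiffAt (x := x)).isSymmSndFDerivAt (by rw [minSmoothness_of_isRCLikeNormedField]; exact WithTop.coe_le_coe.mpr (le_top : (2 : ℕ∞) ≤ ⊤))) a b
  rw [h]

lemma third_symm23 (x v y z : EuclideanSpace ℝ (Fin n)) :
    fderiv ℝ (fderiv ℝ (fderiv ℝ φ)) x v y z = fderiv ℝ (fderiv ℝ (fderiv ℝ φ)) x v z y := by
  have h : (fun p => hess φ p y z) = fun p => hess φ p z y :=
    funext fun p => hess_symm hφ p y z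
  rw [← fderiv_hess_apply hφ x y z v, h, fderiv_hess_apply hφ x z y v]

omit hφ in
lemma ric_fun_eq (m : ℝ) (y z : EuclideanSpace ℝ (Fin n)) :
    (fun p => bakryEmeryRic m φ p y z) =
      fun p => hess φ p y z - (1/m) * (fderiv ℝ φ p y * fderiv ℝ φ p z) := by
  funext p; rw [bakryEmeryRic]; ring

lemma fderiv_ric_entry (m : ℝ) (x y z v : EuclideanSpace ℝ (Fin n)) :
    fderiv ℝ (fun p => bakryEmeryRic m φ p y z) x v =
      fderiv ℝ (fderiv ℝ (fderiv ℝ φ)) x v y z -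
        (1/m) * (hess φ x v y * fderiv ℝ φ x z + fderiv ℝ φ x y * hess φ x v z) := by
  rw [ric_fun_eq]
  rw [fderiv_fun_sub (diff_hess_apply hφ y z x)
    (((diff_f_apply hφ y x).fun_mul (diff_f_apply hφ z x)).const_mul _)]
  rw [ContinuousLinearMap.sub_apply]
  rw [fderiv_const_mul ((diff_f_apply hφ y x).fun_mul (diff_f_apply hφ z x)) (1/m)]
  rw [ContinuousLinearMap.smul_apply]
  rw [fderiv_fun_mul (diff_f_apply hφ y x) (diff_f_apply hφ z x)]
  simp only [ContinuousLinearMap.add_apply, ContinuousLinearMap.smul_apply, smul_eq_mul,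
    fderiv_f_apply hφ, fderiv_hess_apply hφ]
  ring

omit hφ in
lemma wlap_eq :
    weightedLap φ φ = fun p =>
      (∑ i : Fin n, hess φ p (stdBasis i) (stdBasis i)) -
        ∑ i : Fin n, (fderiv ℝ φ p (stdBasis i))^2 := by
  funext p
  rw [weightedLap, lap]
  congr 1
  rw [inner_gradient, clm_decomp]
  refine Finset.sum_congr rfl fun i _ => ?_
  rw [grad_coord]; ring

lemma diff_wlap : Differentiable ℝ (weightedLap φ φ) := by
  rw [wlap_eq]
  refine Differentiable.sub ?_ ?_
  · exact Differentiable.fun_sum fun i _ => diff_hess_apply hφ _ _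
  · exact Differentiable.fun_sum fun i _ => (diff_f_apply hφ _).fun_pow 2

lemma fderiv_wlap (x Z : EuclideanSpace ℝ (Fin n)) :
    fderiv ℝ (weightedLap φ φ) x Z =
      (∑ i : Fin n, fderiv ℝ (fderiv ℝ (fderiv ℝ φ)) x Z (stdBasis i) (stdBasis i)) -
        ∑ i : Fin n, 2 * fderiv ℝ φ x (stdBasis i) * hess φ x Z (stdBasis i) := by
  rw [wlap_eq]
  rw [fderiv_fun_sub (Differentiable.fun_sum (fun i _ => diff_hess_apply hφ _ _) x)
    (Differentiable.fun_sum (fun i _ => (diff_f_apply hφ _).fun_pow 2) x)]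
  rw [ContinuousLinearMap.sub_apply]
  rw [fderiv_fun_sum fun i _ => diff_hess_apply hφ _ _ x]
  rw [fderiv_fun_sum fun i _ => ((diff_f_apply hφ _).fun_pow 2) x]
  rw [ContinuousLinearMap.sum_apply, ContinuousLinearMap.sum_apply]
  congr 1
  · exact Finset.sum_congr rfl fun i _ => fderiv_hess_apply hφ _ _ _ _
  · refine Finset.sum_congr rfl fun i _ => ?_
    have h : (fun p => (fderiv ℝ φ p (stdBasis i))^2) =
        fun p => fderiv ℝ φ p (stdBasis i) * fderiv ℝ φ p (stdBasis i) := by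
      funext p; ring
    rw [h, fderiv_fun_mul (diff_f_apply hφ _ x) (diff_f_apply hφ _ x)]
    simp only [ContinuousLinearMap.add_apply, ContinuousLinearMap.smul_apply, smul_eq_mul,
      fderiv_f_apply hφ]
    ring

omit hφ in
lemma f_grad_eq (x : EuclideanSpace ℝ (Fin n)) :
    fderiv ℝ φ x (gradient φ x) = ∑ i : Fin n, (fderiv ℝ φ x (stdBasis i))^2 := by
  rw [clm_decomp]
  refine Finset.sum_congr rfl fun i _ => ?_
  rw [grad_coord]; ring

omit hφ in
lemma hess_grad_eq (x Z : EuclideanSpace ℝ (Fin n)) :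
    hess φ x (gradient φ x) Z =
      ∑ i : Fin n, fderiv ℝ φ x (stdBasis i) * hess φ x (stdBasis i) Z := by
  have h := clm_decomp ((fderiv ℝ (fderiv ℝ φ) x).flip Z) (gradient φ x)
  simp only [ContinuousLinearMap.flip_apply] at h
  rw [show hess φ x (gradient φ x) Z = fderiv ℝ (fderiv ℝ φ) x (gradient φ x) Z from rfl, h]
  refine Finset.sum_congr rfl fun i _ => ?_
  rw [grad_coord]; rfl

omit hφ in
lemma wlap_val (x : EuclideanSpace ℝ (Fin n)) :
    weightedLap φ φ x =
      (∑ i : Fin n, hess φ x (stdBasis i) (stdBasis i)) -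
        ∑ i : Fin n, (fderiv ℝ φ x (stdBasis i))^2 := by
  rw [wlap_eq]

end Aux

/-- Proposition 4.4 of the paper (flat background):
`ℬ_φ Ric_φ^m = ½ e^{2φ/m} d(e^{−2φ/m} Δ_φ φ)`, equivalently
`ℬ_φ Ric_φ^m = ½ d(Δ_φ φ) − (1/m)(Δ_φ φ) dφ`. -/
theorem weighted_bianchi_operator_identity (hn : 1 ≤ n) (m : ℝ) (hm : m ≠ 0)
    (φ : EuclideanSpace ℝ (Fin n) → ℝ) (hφ : ContDiff ℝ (⊤ : ℕ∞) φ) :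
    (∀ x Z : EuclideanSpace ℝ (Fin n),
      weightedBianchiOp φ (bakryEmeryRic m φ) x Z =
        (1 / 2) * Real.exp (2 * φ x / m) *
          fderiv ℝ (fun p => Real.exp (-2 * φ p / m) * weightedLap φ φ p) x Z) ∧
    (∀ x Z : EuclideanSpace ℝ (Fin n),
      weightedBianchiOp φ (bakryEmeryRic m φ) x Z =
        (1 / 2) * fderiv ℝ (weightedLap φ φ) x Z
          - (1 / m) * weightedLap φ φ x * fderiv ℝ φ x Z) := by
  have key : ∀ x Z : EuclideanSpace ℝ (Fin n),
      weightedBianchiOp φ (bakryEmeryRic m φ) x Z =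
        (1 / 2) * fderiv ℝ (weightedLap φ φ) x Z
          - (1 / m) * weightedLap φ φ x * fderiv ℝ φ x Z := by
    intro x Z
    -- abbreviations
    set S1 : ℝ := ∑ i : Fin n, fderiv ℝ (fderiv ℝ (fderiv ℝ φ)) x Z (stdBasis i) (stdBasis i)
      with hS1
    set S2 : ℝ := ∑ i : Fin n, fderiv ℝ φ x (stdBasis i) * hess φ x (stdBasis i) Z with hS2
    set S3 : ℝ := ∑ i : Fin n, hess φ x (stdBasis i) (stdBasis i) with hS3
    set S4 : ℝ := ∑ i : Fin n, (fderiv ℝ φ x (stdBasis i))^2 with hS4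
    set D : ℝ := fderiv ℝ φ x Z with hD
    have hdiv : (∑ i : Fin n,
        fderiv ℝ (fun p => bakryEmeryRic m φ p (stdBasis i) Z) x (stdBasis i)) =
        S1 - (1/m) * (S3 * D + S2) := by
      have hterm : ∀ i : Fin n,
          fderiv ℝ (fun p => bakryEmeryRic m φ p (stdBasis i) Z) x (stdBasis i) =
            fderiv ℝ (fderiv ℝ (fderiv ℝ φ)) x Z (stdBasis i) (stdBasis i) -
              (1/m) * (hess φ x (stdBasis i) (stdBasis i) * D +
                fderiv ℝ φ x (stdBasis i) * hess φ x (stdBasis i) Z) := by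
        intro i
        rw [fderiv_ric_entry hφ]
        rw [third_symm23 hφ x (stdBasis i) (stdBasis i) Z,
          third_symm12 hφ x (stdBasis i) Z (stdBasis i)]
      rw [Finset.sum_congr rfl fun i _ => hterm i]
      rw [Finset.sum_sub_distrib, ← Finset.mul_sum, Finset.sum_add_distrib, ← Finset.sum_mul]
    have htr : fderiv ℝ (tensorTrace (bakryEmeryRic m φ)) x Z = S1 - (1/m) * (2 * S2) := by
      have heq : tensorTrace (bakryEmeryRic m φ) =
          fun p => ∑ i : Fin n, bakryEmeryRic m φ p (stdBasis i) (stdBasis i) := rfl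
      rw [heq, fderiv_fun_sum fun i _ => by
        rw [ric_fun_eq]
        exact ((diff_hess_apply hφ _ _ x).sub
          (((diff_f_apply hφ _ x).fun_mul (diff_f_apply hφ _ x)).const_mul _))]
      rw [ContinuousLinearMap.sum_apply]
      have hterm : ∀ i : Fin n,
          fderiv ℝ (fun p => bakryEmeryRic m φ p (stdBasis i) (stdBasis i)) x Z =
            fderiv ℝ (fderiv ℝ (fderiv ℝ φ)) x Z (stdBasis i) (stdBasis i) -
              (1/m) * (2 * (fderiv ℝ φ x (stdBasis i) * hess φ x (stdBasis i) Z)) := by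
        intro i
        rw [fderiv_ric_entry hφ]
        rw [hess_symm hφ x Z (stdBasis i)]
        ring
      rw [Finset.sum_congr rfl fun i _ => hterm i]
      rw [Finset.sum_sub_distrib, ← Finset.mul_sum, ← Finset.mul_sum]
    have hric : bakryEmeryRic m φ x (gradient φ x) Z = S2 - (1/m) * S4 * D := by
      rw [bakryEmeryRic]
      rw [hess_grad_eq, f_grad_eq]
    rw [weightedBianchiOp, weightedDiv, hdiv, htr, hric,
      fderiv_wlap hφ, wlap_val]
    have h2S : (∑ i : Fin n, 2 * fderiv ℝ φ x (stdBasis i) * hess φ x Z (stdBasis i)) =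
        2 * S2 := by
      rw [Finset.mul_sum]
      refine Finset.sum_congr rfl fun i _ => ?_
      rw [hess_symm hφ x Z (stdBasis i)]; ring
    rw [h2S]
    field_simp
    ring
  refine ⟨?_, key⟩
  intro x Z
  rw [key x Z]
  have hexpd : Differentiable ℝ (fun p => Real.exp (-2 * φ p / m)) := by
    have hdφ : Differentiable ℝ φ := hφ.differentiable (by simp)
    fun_prop
  have hwd := diff_wlap hφ
  rw [fderiv_fun_mul (hexpd x) (hwd x)]
  rw [ContinuousLinearMap.add_apply, ContinuousLinearMap.smul_apply,
    ContinuousLinearMap.smul_apply]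
  have hin : DifferentiableAt ℝ (fun p => -2 * φ p / m) x := by
    have hdφ : Differentiable ℝ φ := hφ.differentiable (by simp)
    fun_prop
  rw [fderiv_exp hin]
  have hlin : fderiv ℝ (fun p => -2 * φ p / m) x Z = -2 * fderiv ℝ φ x Z / m := by
    have h : (fun p => -2 * φ p / m) = fun p => (-2/m) * φ p := by funext p; ring
    rw [h, fderiv_const_mul (hφ.differentiable (by simp) x)]
    rw [ContinuousLinearMap.smul_apply]
    simp [smul_eq_mul]; ring
  rw [ContinuousLinearMap.smul_apply, hlin]
  have hexp : Real.exp (2 * φ x / m) * Real.exp (-2 * φ x / m) = 1 := by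
    rw [← Real.exp_add]
    rw [show 2 * φ x / m + -2 * φ x / m = 0 by ring]
    exact Real.exp_zero
  simp only [smul_eq_mul]
  linear_combination (1/m * weightedLap φ φ x * fderiv ℝ φ x Z
    - 1/2 * fderiv ℝ (weightedLap φ φ) x Z) * hexp

end
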